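/- Let z = x − y* + t e_N with z_N > 0. Then H(x,y,t) = (4π)^{-N/2} z_N |z|^{-N} e^{z_N/2} ∫_0^{t/|z|²} (1 − z_N^{-1}|z|² η) η^{-(N+2)/2} e^{-1/(4η) − |z|²η/4} dη. -/

import Mathlib

open Real MeasureTheory Set

/-- Reflection `y* = (y', -y_N)` across the boundary of the half-space. -/
noncomputable def ystar (N : ℕ) (y : Fin (N + 1) → ℝ) : Fin (N + 1) → ℝ :=
  Function.update y (Fin.last N) (-(y (Fin.last N)))

/-- The last unit vector `e_N`. -/
noncomputable def eN (N : ℕ) : Fin (N + 1) → ℝ := Pi.single (Fin.last N) 1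

/-- `H(x,y,t) = ∫_0^t (4π(t-τ))^{-N/2} ((x_N+y_N+τ)/(t-τ)) e^{-|x-y*+τe_N|²/(4(t-τ))} dτ`. -/
noncomputable def Hexp (N : ℕ) (x y : Fin (N + 1) → ℝ) (t : ℝ) : ℝ :=
  ∫ τ in (0 : ℝ)..t,
    (4 * π * (t - τ)) ^ (-((N : ℝ) + 1) / 2) *
      ((x (Fin.last N) + y (Fin.last N) + τ) / (t - τ)) *
      Real.exp (-(∑ i, (x i - ystar N y i + τ * eN N i) ^ 2) / (4 * (t - τ)))

/-- With `z = x - y* + t e_N` (and `z_N > 0`),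
`H(x,y,t) = (4π)^{-N/2} z_N |z|^{-N} e^{z_N/2}
  ∫_0^{t/|z|²} (1 - z_N⁻¹|z|²η) η^{-(N+2)/2} e^{-1/(4η) - |z|²η/4} dη`
(dimension is `N+1 ≥ 1`). -/
theorem stmt_8 (N : ℕ) (x y : Fin (N + 1) → ℝ) (hx : 0 ≤ x (Fin.last N))
    (hy : 0 ≤ y (Fin.last N)) (t : ℝ) (ht : 0 < t)
    (z : Fin (N + 1) → ℝ) (hz : z = x - ystar N y + t • eN N) (hzN : 0 < z (Fin.last N)) :
    Hexp N x y t
      = (4 * π) ^ (-((N : ℝ) + 1) / 2) * z (Fin.last N)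
          * Real.sqrt (∑ i, z i ^ 2) ^ (-((N : ℝ) + 1))
          * Real.exp (z (Fin.last N) / 2)
          * ∫ η in (0 : ℝ)..(t / ∑ i, z i ^ 2),
              (1 - (z (Fin.last N))⁻¹ * (∑ i, z i ^ 2) * η)
                * η ^ (-((N : ℝ) + 1 + 2) / 2)
                * Real.exp (-1 / (4 * η) - (∑ i, z i ^ 2) * η / 4) := by
  set zN := z (Fin.last N) with hzNdef
  set A := ∑ i, z i ^ 2 with hAdef
  have hzN0 : zN ≠ 0 := ne_of_gt hzN
  have hA : 0 < A := by
    have h1 : zN ^ 2 ≤ A :=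
      Finset.single_le_sum (f := fun i => z i ^ 2) (fun i _ => sq_nonneg _) (Finset.mem_univ _)
    nlinarith
  have hA0 : A ≠ 0 := ne_of_gt hA
  have hp1 : (-((N : ℝ) + 1) / 2) ≠ 0 := by
    have : (0:ℝ) < ((N : ℝ) + 1) / 2 := by positivity
    intro h; rw [neg_div] at h; linarith [neg_eq_zero.mp h]
  have hp2 : (-((N : ℝ) + 1 + 2) / 2) ≠ 0 := by
    have : (0:ℝ) < ((N : ℝ) + 1 + 2) / 2 := by positivity
    intro h; rw [neg_div] at h; linarith [neg_eq_zero.mp h]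
  have heN : ∀ i, eN N i = if i = Fin.last N then 1 else 0 := fun i => by
    simp [eN, Pi.single_apply]
  have hzfun : ∀ i, z i = x i - ystar N y i + t * eN N i := by
    intro i; rw [hz]; simp
  have hzNval : zN = x (Fin.last N) + y (Fin.last N) + t := by
    rw [hzNdef, hzfun (Fin.last N), heN]
    simp [ystar]
  have hsum : ∀ τ : ℝ, ∑ i, (x i - ystar N y i + τ * eN N i) ^ 2
      = A - 2 * (t - τ) * zN + (t - τ) ^ 2 := by
    intro τ
    have h1 : ∀ i, (x i - ystar N y i + τ * eN N i) ^ 2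
        = z i ^ 2 - 2 * (t - τ) * (z i * eN N i) + (t - τ) ^ 2 * (eN N i * eN N i) := by
      intro i
      have h := hzfun i
      have : x i - ystar N y i + τ * eN N i = z i - (t - τ) * eN N i := by rw [h]; ring
      rw [this]; ring
    simp_rw [h1]
    rw [Finset.sum_add_distrib, Finset.sum_sub_distrib, ← Finset.mul_sum, ← Finset.mul_sum]
    have h2 : ∑ i, z i * eN N i = zN := by
      simp [heN, mul_ite]
      exact hzNdef.symm
    have h3 : ∑ i, eN N i * eN N i = 1 := by
      simp [heN, ite_and]
    rw [h2, h3]; ring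
  set F : ℝ → ℝ := fun s => (4 * π * s) ^ (-((N : ℝ) + 1) / 2) * ((zN - s) / s)
      * Real.exp (-(A - 2 * s * zN + s ^ 2) / (4 * s)) with hF
  have step1 : Hexp N x y t = ∫ τ in (0:ℝ)..t, F (t - τ) := by
    unfold Hexp
    apply intervalIntegral.integral_congr
    intro τ _
    simp only [hF, hsum τ]
    have : x (Fin.last N) + y (Fin.last N) + τ = zN - (t - τ) := by
      rw [hzNval]; ring
    rw [this]
  have step2 : (∫ τ in (0:ℝ)..t, F (t - τ)) = ∫ s in (0:ℝ)..t, F s := by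
    rw [intervalIntegral.integral_comp_sub_left F t, sub_self, sub_zero]
  have step3 : (∫ s in (0:ℝ)..t, F s) = A • ∫ η in (0:ℝ)..(t/A), F (A * η) := by
    rw [intervalIntegral.smul_integral_comp_mul_left F A, mul_zero, mul_div_cancel₀ _ hA0]
  set G : ℝ → ℝ := fun η => (1 - zN⁻¹ * A * η) * η ^ (-((N : ℝ) + 1 + 2) / 2)
      * Real.exp (-1 / (4 * η) - A * η / 4) with hG
  set C : ℝ := (4 * π) ^ (-((N : ℝ) + 1) / 2) * zN * Real.sqrt A ^ (-((N : ℝ) + 1))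
      * Real.exp (zN / 2) with hC
  have e3 : Real.sqrt A ^ (-((N : ℝ) + 1)) = A ^ (-((N : ℝ) + 1) / 2) := by
    rw [Real.sqrt_eq_rpow, ← Real.rpow_mul hA.le]
    congr 1; ring
  have key : ∀ η : ℝ, 0 ≤ η → A * F (A * η) = C * G η := by
    intro η hη
    rcases eq_or_lt_of_le hη with h0 | h0
    · rw [← h0, mul_zero]
      have hF0 : F 0 = 0 := by
        simp only [hF]
        rw [mul_zero, Real.zero_rpow hp1, zero_mul, zero_mul]
      have hG0 : G 0 = 0 := by
        simp only [hG]
        rw [Real.zero_rpow hp2, mul_zero, zero_mul]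
      rw [hF0, hG0, mul_zero, mul_zero]
    · have hη0 : η ≠ 0 := ne_of_gt h0
      have hAη : 0 < A * η := mul_pos hA h0
      have e1 : (4 * π * (A * η)) ^ (-((N : ℝ) + 1) / 2)
          = (4*π) ^ (-((N : ℝ) + 1) / 2) * A ^ (-((N : ℝ) + 1) / 2) * η ^ (-((N : ℝ) + 1) / 2) := by
        rw [show 4 * π * (A * η) = 4 * π * A * η by ring,
            Real.mul_rpow (by positivity) h0.le, Real.mul_rpow (by positivity) hA.le]
      have e2 : Real.exp (-(A - 2 * (A*η) * zN + (A*η) ^ 2) / (4 * (A*η)))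
          = Real.exp (zN / 2) * Real.exp (-1 / (4 * η) - A * η / 4) := by
        rw [← Real.exp_add]
        congr 1
        field_simp
        ring
      have e4 : η ^ (-((N : ℝ) + 1 + 2) / 2) = η ^ (-((N : ℝ) + 1) / 2) * η⁻¹ := by
        rw [← Real.rpow_neg_one η, ← Real.rpow_add h0]
        congr 1; ring
      simp only [hF, hG]
      rw [hC, e1, e2, e3, e4]
      field_simp
  rw [step1, step2, step3, smul_eq_mul, ← intervalIntegral.integral_const_mul]
  rw [intervalIntegral.integral_congr (g := fun η => C * G η) (fun η hη => by
    apply key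
    rcases (Set.mem_uIcc.mp hη) with h | h
    · exact h.1
    · linarith [h.1, div_nonneg ht.le hA.le])]
  rw [intervalIntegral.integral_const_mul, hC, hG]
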